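/- arXiv:2303.00160 — 3 statements merged into one kernel-verified Lean document; each statement's English description precedes it below -/
import Mathlib

section
/- Fix dimensions n_x, n_ψ, n_θ ≥ 1 and indices i ∈ {1,…,n_ψ}, j ∈ {1,…,n_θ}. Let Ψ = ∏_{k=1}^{n_ψ} [a_k, b_k] be a compact box in ℝ^{n_ψ} with a_k < b_k for all k. Let p : ℝ^{n_x} × ℝ^{n_ψ} → ℝ be nonnegative, let θ̂ : ℝ^{n_x} → ℝ^{n_θ} be measurable, and let θ₀ : ℝ^{n_ψ} → ℝ^{n_θ} be continuously differentiable on Ψ. Assume: (i) for each x, the function ψ ↦ p(x, ψ) is continuous on Ψ with continuous partial derivative ∂p/∂ψ_i, and p(x, ψ) = 0 whenever ψ_i = a_i or ψ_i = b_i; (ii) the functions (x, ψ) ↦ θ̂_j(x) ∂p/∂ψ_i(x, ψ), (x, ψ) ↦ θ_{0,j}(ψ) ∂p/∂ψ_i(x, ψ), and (x, ψ) ↦ (∂θ_{0,j}/∂ψ_i)(ψ) p(x, ψ) are integrable on ℝ^{n_x} × Ψ. Then ∫_{ℝ^{n_x}} ∫_Ψ (θ̂_j(x) − θ_{0,j}(ψ))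 (∂p/∂ψ_i)(x, ψ) dψ dx = ∫_{ℝ^{n_x}} ∫_Ψ (∂θ_{0,j}/∂ψ_i)(ψ) p(x, ψ) dψ dx. -/
/-!
For fixed `x`, the integrand `(θ̂_j(x) - θ_{0,j}(ψ)) ∂p/∂ψ_i - (∂θ_{0,j}/∂ψ_i) p` is the `i`-th
partial derivative of `ψ ↦ (θ̂_j(x) - θ_{0,j}(ψ)) p(x, ψ)`, which vanishes on the two `i`-faces of
the box. Integrating first in `ψ_i` (Fubini) and using the fundamental theorem of calculus on each
slice, its integral over the box is zero. Continuity on the compact box makes every slice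
integrable, so the identity holds pointwise in `x`.
-/

open MeasureTheory Set Function

theorem setIntegral_Icc_eq_integral_insertNth {n : ℕ} {E : Type*} [NormedAddCommGroup E]
    [NormedSpace ℝ E] (i : Fin (n + 1)) (a b : Fin (n + 1) → ℝ) {g : (Fin (n + 1) → ℝ) → E}
    (hg : IntegrableOn g (Icc a b)) :
    ∫ ψ in Icc a b, g ψ = ∫ y in Icc (fun k => a (i.succAbove k)) (fun k => b (i.succAbove k)),
      ∫ t in Icc (a i) (b i), g (i.insertNth t y) := by
  set e : ℝ × (Fin n → ℝ) ≃ᵐ (Fin (n + 1) → ℝ) :=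
    (MeasurableEquiv.piFinSuccAbove (fun _ => ℝ) i).symm
  have he : MeasurePreserving e := (volume_preserving_piFinSuccAbove (fun _ => ℝ) i).symm _
  have hpre : e ⁻¹' Icc a b = Icc (a i) (b i) ×ˢ
      Icc (fun k => a (i.succAbove k)) (fun k => b (i.succAbove k)) := by
    ext ⟨t, y⟩
    exact Fin.insertNth_mem_Icc
  have hg' := (he.integrableOn_comp_preimage e.measurableEmbedding).2 hg
  rw [← he.setIntegral_preimage_emb e.measurableEmbedding, hpre, Measure.volume_eq_prod,
    ← setIntegral_prod_swap, setIntegral_prod]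
  · rfl
  · rw [hpre, Measure.volume_eq_prod] at hg'
    exact hg'.swap

theorem mapsTo_update_Icc {ι : Type*} [DecidableEq ι] {a b ψ : ι → ℝ} (hψ : ψ ∈ Icc a b)
    (i : ι) : MapsTo (update ψ i) (Icc (a i) (b i)) (Icc a b) := by
  intro t ht
  rw [← pi_univ_Icc] at hψ ⊢
  exact (update_mem_pi_iff_of_mem hψ).2 fun _ => ht

theorem ContDiffOn.continuousOn_of_hasDerivAt_update {ι F : Type*} [Fintype ι] [DecidableEq ι]
    [NormedAddCommGroup F] [NormedSpace ℝ F] {a b : ι → ℝ} (hab : ∀ k, a k < b k)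
    {f f' : (ι → ℝ) → F} {i : ι} (hf : ContDiffOn ℝ 1 f (Icc a b))
    (hf' : ∀ ψ ∈ Icc a b, HasDerivAt (fun t => f (update ψ i t)) (f' ψ) (ψ i)) :
    ContinuousOn f' (Icc a b) := by
  have hU : UniqueDiffOn ℝ (Icc a b) := by
    rw [← pi_univ_Icc]
    exact UniqueDiffOn.univ_pi fun k => uniqueDiffOn_Icc (hab k)
  refine ((hf.continuousOn_fderivWithin hU le_rfl).clm_apply
    (continuousOn_const (c := Pi.single i (1 : ℝ)))).congr fun ψ hψ => ?_
  have hfψ :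
      HasFDerivWithinAt f (fderivWithin ℝ f (Icc a b) ψ) (Icc a b) (update ψ i (ψ i)) := by
    rw [update_eq_self]
    exact (hf.differentiableOn one_ne_zero ψ hψ).hasFDerivWithinAt
  have hslice := hfψ.comp_hasDerivWithinAt (ψ i) (hasDerivAt_update ψ i (ψ i)).hasDerivWithinAt
    (mapsTo_update_Icc hψ i)
  exact (uniqueDiffOn_Icc (hab i) _ ⟨hψ.1 i, hψ.2 i⟩).eq_deriv _
    (hf' ψ hψ).hasDerivWithinAt hslice

theorem setIntegral_Icc_eq_zero_of_hasDerivAt_update {n : ℕ} {E : Type*} [NormedAddCommGroup E]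
    [NormedSpace ℝ E] [CompleteSpace E] (i : Fin n) {a b : Fin n → ℝ} (hab : a ≤ b)
    {f g : (Fin n → ℝ) → E} (hg : ContinuousOn g (Icc a b))
    (hf : ∀ ψ ∈ Icc a b, HasDerivAt (fun t => f (update ψ i t)) (g ψ) (ψ i))
    (hvanish : ∀ ψ ∈ Icc a b, ψ i = a i ∨ ψ i = b i → f ψ = 0) :
    ∫ ψ in Icc a b, g ψ = 0 := by
  cases n with
  | zero => exact i.elim0
  | succ n =>
  rw [setIntegral_Icc_eq_integral_insertNth i a b (hg.integrableOn_compact isCompact_Icc)]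
  refine (setIntegral_congr_fun measurableSet_Icc fun y hy => ?_).trans (integral_zero _ _)
  have hmem : MapsTo (fun t => i.insertNth t y) (Icc (a i) (b i)) (Icc a b) :=
    fun t ht => Fin.insertNth_mem_Icc.2 ⟨ht, hy⟩
  have hderiv : ∀ t ∈ uIcc (a i) (b i),
      HasDerivAt (fun s => f (i.insertNth s y)) (g (i.insertNth t y)) t := by
    intro t ht
    rw [uIcc_of_le (hab i)] at ht
    simpa [Fin.update_insertNth] using hf _ (hmem ht)
  have hcont : ContinuousOn (fun t => g (i.insertNth t y)) (Icc (a i) (b i)) :=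
    hg.comp (by fun_prop) hmem
  rw [integral_Icc_eq_integral_Ioc, ← intervalIntegral.integral_of_le (hab i),
    intervalIntegral.integral_eq_sub_of_hasDerivAt hderiv (hcont.intervalIntegrable_of_Icc (hab i)),
    hvanish _ (hmem (right_mem_Icc.2 (hab i))) (by simp),
    hvanish _ (hmem (left_mem_Icc.2 (hab i))) (by simp), sub_zero]

theorem setIntegral_Icc_mul_eq_neg_of_hasDerivAt_update {n : ℕ} (i : Fin n) {a b : Fin n → ℝ}
    (hab : a ≤ b) {u u' v v' : (Fin n → ℝ) → ℝ}
    (hu : ContinuousOn u (Icc a b)) (hu' : ContinuousOn u' (Icc a b))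
    (hv : ContinuousOn v (Icc a b)) (hv' : ContinuousOn v' (Icc a b))
    (hu_deriv : ∀ ψ ∈ Icc a b, HasDerivAt (fun t => u (update ψ i t)) (u' ψ) (ψ i))
    (hv_deriv : ∀ ψ ∈ Icc a b, HasDerivAt (fun t => v (update ψ i t)) (v' ψ) (ψ i))
    (hvanish : ∀ ψ ∈ Icc a b, ψ i = a i ∨ ψ i = b i → v ψ = 0) :
    ∫ ψ in Icc a b, u ψ * v' ψ = -∫ ψ in Icc a b, u' ψ * v ψ := by
  have hprod : ∫ ψ in Icc a b, (u' ψ * v ψ + u ψ * v' ψ) = 0 :=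
    setIntegral_Icc_eq_zero_of_hasDerivAt_update i hab (f := fun ψ => u ψ * v ψ)
      ((hu'.mul hv).add (hu.mul hv'))
      (fun ψ hψ => by simpa only [update_eq_self] using (hu_deriv ψ hψ).fun_mul (hv_deriv ψ hψ))
      (fun ψ hψ hface => by simp [hvanish ψ hψ hface])
  have hu'v : IntegrableOn (fun ψ => u' ψ * v ψ) (Icc a b) :=
    (hu'.mul hv).integrableOn_compact isCompact_Icc
  have huv' : IntegrableOn (fun ψ => u ψ * v' ψ) (Icc a b) :=
    (hu.mul hv').integrableOn_compact isCompact_Icc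
  rw [integral_add hu'v huv'] at hprod
  linear_combination hprod

theorem stmt_5_general (nx nψ nθ : ℕ)
    (i : Fin nψ) (j : Fin nθ) (a b : Fin nψ → ℝ) (hab : ∀ k, a k < b k)
    (p : (Fin nx → ℝ) → (Fin nψ → ℝ) → ℝ)
    (dp : (Fin nx → ℝ) → (Fin nψ → ℝ) → ℝ)
    (θhat : (Fin nx → ℝ) → Fin nθ → ℝ)
    (θ0 : (Fin nψ → ℝ) → Fin nθ → ℝ)
    (dθ0 : (Fin nψ → ℝ) → ℝ)
    (hθ0_smooth : ContDiffOn ℝ 1 θ0 (Set.Icc a b))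
    (hθ0_deriv : ∀ ψ ∈ Set.Icc a b,
      HasDerivAt (fun t => θ0 (Function.update ψ i t) j) (dθ0 ψ) (ψ i))
    -- (i) regularity of the joint density in the `i`-th coordinate, and vanishing
    -- on the two faces of the box in the `i`-th coordinate
    (hp_cont : ∀ x, ContinuousOn (p x) (Set.Icc a b))
    (hp_deriv : ∀ x, ∀ ψ ∈ Set.Icc a b,
      HasDerivAt (fun t => p x (Function.update ψ i t)) (dp x ψ) (ψ i))
    (hdp_cont : ∀ x, ContinuousOn (dp x) (Set.Icc a b))
    (hvanish : ∀ x, ∀ ψ ∈ Set.Icc a b, (ψ i = a i ∨ ψ i = b i) → p x ψ = 0) :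
    ∫ x : Fin nx → ℝ, ∫ ψ in Set.Icc a b, (θhat x j - θ0 ψ j) * dp x ψ
      = ∫ x : Fin nx → ℝ, ∫ ψ in Set.Icc a b, dθ0 ψ * p x ψ := by
  have hθ0j : ContDiffOn ℝ 1 (fun ψ => θ0 ψ j) (Icc a b) :=
    (contDiff_apply ℝ ℝ j).comp_contDiffOn hθ0_smooth
  have hdθ0 : ContinuousOn dθ0 (Icc a b) :=
    hθ0j.continuousOn_of_hasDerivAt_update hab hθ0_deriv
  congr 1 with x
  have hparts := setIntegral_Icc_mul_eq_neg_of_hasDerivAt_update i (fun k => (hab k).le)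
    (u := fun ψ => θhat x j - θ0 ψ j) (u' := fun ψ => -dθ0 ψ)
    (continuousOn_const.sub hθ0j.continuousOn) hdθ0.neg (hp_cont x) (hdp_cont x)
    (fun ψ hψ => (hθ0_deriv ψ hψ).const_sub _) (hp_deriv x) (hvanish x)
  simpa only [neg_mul, integral_neg, neg_neg] using hparts

/-- The intermediate identity in the proof of Theorem 1 of the paper, combining
Lemma 1 and Lemma 2: for the true joint density `p` of data `x` and parameter `ψ`
(supported in the box and vanishing on its two faces in the `i`-th coordinate),
an estimator `θ̂` and the pseudotrue map `θ₀`,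
`∫∫ (θ̂_j(x) − θ_{0,j}(ψ)) ∂p/∂ψ_i dψ dx = ∫∫ (∂θ_{0,j}/∂ψ_i) p dψ dx`. -/
theorem stmt_5 (nx nψ nθ : ℕ) (hnx : 1 ≤ nx) (hnψ : 1 ≤ nψ) (hnθ : 1 ≤ nθ)
    (i : Fin nψ) (j : Fin nθ) (a b : Fin nψ → ℝ) (hab : ∀ k, a k < b k)
    (p : (Fin nx → ℝ) → (Fin nψ → ℝ) → ℝ)
    (dp : (Fin nx → ℝ) → (Fin nψ → ℝ) → ℝ)
    (θhat : (Fin nx → ℝ) → Fin nθ → ℝ)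
    (θ0 : (Fin nψ → ℝ) → Fin nθ → ℝ)
    (dθ0 : (Fin nψ → ℝ) → ℝ)
    (hp_nonneg : ∀ x ψ, 0 ≤ p x ψ)
    (hθhat_meas : Measurable θhat)
    (hθ0_smooth : ContDiffOn ℝ 1 θ0 (Set.Icc a b))
    (hθ0_deriv : ∀ ψ ∈ Set.Icc a b,
      HasDerivAt (fun t => θ0 (Function.update ψ i t) j) (dθ0 ψ) (ψ i))
    -- (i) regularity of the joint density in the `i`-th coordinate, and vanishing
    -- on the two faces of the box in the `i`-th coordinate
    (hp_cont : ∀ x, ContinuousOn (p x) (Set.Icc a b))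
    (hp_deriv : ∀ x, ∀ ψ ∈ Set.Icc a b,
      HasDerivAt (fun t => p x (Function.update ψ i t)) (dp x ψ) (ψ i))
    (hdp_cont : ∀ x, ContinuousOn (dp x) (Set.Icc a b))
    (hvanish : ∀ x, ∀ ψ ∈ Set.Icc a b, (ψ i = a i ∨ ψ i = b i) → p x ψ = 0)
    -- (ii) integrability on ℝ^{n_x} × Ψ
    (hint1 : Integrable (fun z : (Fin nx → ℝ) × (Fin nψ → ℝ) => θhat z.1 j * dp z.1 z.2)
      ((volume : Measure (Fin nx → ℝ)).prod (volume.restrict (Set.Icc a b))))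
    (hint2 : Integrable (fun z : (Fin nx → ℝ) × (Fin nψ → ℝ) => θ0 z.2 j * dp z.1 z.2)
      ((volume : Measure (Fin nx → ℝ)).prod (volume.restrict (Set.Icc a b))))
    (hint3 : Integrable (fun z : (Fin nx → ℝ) × (Fin nψ → ℝ) => dθ0 z.2 * p z.1 z.2)
      ((volume : Measure (Fin nx → ℝ)).prod (volume.restrict (Set.Icc a b)))) :
    ∫ x : Fin nx → ℝ, ∫ ψ in Set.Icc a b, (θhat x j - θ0 ψ j) * dp x ψ
      = ∫ x : Fin nx → ℝ, ∫ ψ in Set.Icc a b, dθ0 ψ * p x ψ :=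
  stmt_5_general nx nψ nθ i j a b hab p dp θhat θ0 dθ0 hθ0_smooth hθ0_deriv hp_cont hp_deriv
    hdp_cont hvanish
end

section
/- Fix dimensions n_x, n_ψ, n_θ ≥ 1. Let Ψ = ∏_{k=1}^{n_ψ} [a_k, b_k] be a compact box in ℝ^{n_ψ} with a_k < b_k for all k. Let p : ℝ^{n_x} × ℝ^{n_ψ} → ℝ be nonnegative, let θ̂ : ℝ^{n_x} → ℝ^{n_θ} be measurable, let θ₀ : ℝ^{n_ψ} → ℝ^{n_θ} be continuously differentiable on Ψ with Jacobian matrix Dθ₀(ψ) ∈ ℝ^{n_θ × n_ψ}, and let s : ℝ^{n_x} × ℝ^{n_ψ} → ℝ^{n_ψ} be measurable. Assume: (i) for each x and each i, ψ ↦ p(x, ψ) is continuous on Ψ with continuous partial derivative ∂p/∂ψ_i, and p(x, ψ) = 0 whenever ψ_i = a_i or ψ_i = b_i; (ii) ∂p/∂ψ_i(x, ψ) = s_i(x, ψ) p(x, ψ) for all (x, ψ) ∈ ℝ^{n_x} × Ψ and all i (s is the score ∂/∂ψ ln p where p > 0); (iii) all entries of (θ̂(x) − θ₀(ψ))(θ̂(x)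 − θ₀(ψ))ᵀ p(x, ψ), (θ̂(x) − θ₀(ψ)) s(x, ψ)ᵀ p(x, ψ), s(x, ψ) s(x, ψ)ᵀ p(x, ψ), and Dθ₀(ψ) p(x, ψ) are integrable on ℝ^{n_x} × Ψ. Define E = ∫∫ (θ̂(x) − θ₀(ψ))(θ̂(x) − θ₀(ψ))ᵀ p(x, ψ) dψ dx, T = ∫∫ Dθ₀(ψ) p(x, ψ) dψ dx, and J = ∫∫ s(x, ψ) s(x, ψ)ᵀ p(x, ψ) dψ dx, and assume J is positive definite. Then E − T J⁻¹ Tᵀ is positive semidefinite. -/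
/-!
For fixed `x`, integrating by parts in `ψᵢ` over the box (no boundary terms, since `p` vanishes on
the faces) gives `∫ (θ̂ - θ₀) sᵢ p = ∫ ∂ᵢθ₀ p`: the cross second moment of the error `θ̂ - θ₀(ψ)`
and the score is `T`. The joint second-moment matrix of `(θ̂ - θ₀(ψ), s)` under `p` is a Gram
matrix, hence positive semidefinite, with blocks `E, T, Tᵀ, J`; its Schur complement with respect
to the positive definite block `J` is `E - T J⁻¹ Tᵀ`.
-/

open Matrix MeasureTheory Set

section Box

variable {m : ℕ} {a b : Fin (m + 1) → ℝ}

theorem setIntegral_Icc_eq_integral_Icc_insertNth (i : Fin (m + 1))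
    {f : (Fin (m + 1) → ℝ) → ℝ} (hf : IntegrableOn f (Icc a b)) :
    ∫ ψ in Icc a b, f ψ = ∫ y in Icc (a ∘ i.succAbove) (b ∘ i.succAbove),
      ∫ t in Icc (a i) (b i), f (i.insertNth t y) := by
  let e : ℝ × (Fin m → ℝ) ≃ᵐ (Fin (m + 1) → ℝ) :=
    (MeasurableEquiv.piFinSuccAbove (fun _ => ℝ) i).symm
  have he : MeasurePreserving e :=
    (volume_preserving_piFinSuccAbove (fun _ : Fin (m + 1) => ℝ) i).symm _
  have hbox : e ⁻¹' Icc a b = Icc (a i) (b i) ×ˢ Icc (a ∘ i.succAbove) (b ∘ i.succAbove) :=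
    ((Fin.insertNthOrderIso (fun _ => ℝ) i).preimage_Icc a b).trans (Icc_prod_eq _ _)
  have hfe : Integrable (fun z => f (e z))
      ((volume.restrict (Icc (a i) (b i))).prod
        (volume.restrict (Icc (a ∘ i.succAbove) (b ∘ i.succAbove)))) := by
    rw [Measure.prod_restrict, ← hbox, ← Measure.volume_eq_prod]
    exact (he.integrableOn_comp_preimage e.measurableEmbedding).2 hf
  rw [← he.setIntegral_preimage_emb e.measurableEmbedding, hbox, Measure.volume_eq_prod,
    ← Measure.prod_restrict, integral_prod_symm _ hfe]
  rfl

theorem integral_Icc_insertNth_eq_zero_of_hasDerivAt (hab : a ≤ b) (i : Fin (m + 1))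
    {g dg : (Fin (m + 1) → ℝ) → ℝ} (hdg : ContinuousOn dg (Icc a b))
    (hg : ∀ ψ ∈ Icc a b, HasDerivAt (fun t => g (Function.update ψ i t)) (dg ψ) (ψ i))
    (hvanish : ∀ ψ ∈ Icc a b, (ψ i = a i ∨ ψ i = b i) → g ψ = 0)
    {y : Fin m → ℝ} (hy : y ∈ Icc (a ∘ i.succAbove) (b ∘ i.succAbove)) :
    ∫ t in Icc (a i) (b i), dg (i.insertNth t y) = 0 := by
  have hmem : ∀ t ∈ Icc (a i) (b i), i.insertNth t y ∈ Icc a b :=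
    fun t ht => Fin.insertNth_mem_Icc.2 ⟨ht, hy⟩
  have hline : ∀ t ∈ uIcc (a i) (b i),
      HasDerivAt (fun t' => g (i.insertNth t' y)) (dg (i.insertNth t y)) t := by
    intro t ht
    rw [uIcc_of_le (hab i)] at ht
    simpa only [Fin.insertNth_apply_same, Fin.update_insertNth] using hg _ (hmem t ht)
  have hint : IntervalIntegrable (fun t => dg (i.insertNth t y)) volume (a i) (b i) := by
    refine ContinuousOn.intervalIntegrable ?_
    have hcont : Continuous fun t : ℝ => (i.insertNth t y : Fin (m + 1) → ℝ) :=
      (continuous_id : Continuous fun t : ℝ => t).finInsertNth i continuous_const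
    rw [uIcc_of_le (hab i)]
    exact hdg.comp hcont.continuousOn hmem
  rw [integral_Icc_eq_integral_Ioc, ← intervalIntegral.integral_of_le (hab i),
    intervalIntegral.integral_eq_sub_of_hasDerivAt hline hint,
    hvanish _ (hmem _ (right_mem_Icc.2 (hab i))) (by simp),
    hvanish _ (hmem _ (left_mem_Icc.2 (hab i))) (by simp), sub_zero]

end Box

theorem integral_Icc_eq_zero_of_hasDerivAt_update {n : ℕ} {a b : Fin n → ℝ} (hab : a ≤ b)
    (i : Fin n) {g dg : (Fin n → ℝ) → ℝ} (hdg : ContinuousOn dg (Icc a b))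
    (hg : ∀ ψ ∈ Icc a b, HasDerivAt (fun t => g (Function.update ψ i t)) (dg ψ) (ψ i))
    (hvanish : ∀ ψ ∈ Icc a b, (ψ i = a i ∨ ψ i = b i) → g ψ = 0) :
    ∫ ψ in Icc a b, dg ψ = 0 := by
  obtain ⟨m, rfl⟩ := Nat.exists_eq_succ_of_ne_zero i.pos.ne'
  rw [setIntegral_Icc_eq_integral_Icc_insertNth i (hdg.integrableOn_compact isCompact_Icc)]
  refine (setIntegral_congr_fun measurableSet_Icc fun y hy => ?_).trans (integral_zero _ _)
  exact integral_Icc_insertNth_eq_zero_of_hasDerivAt hab i hdg hg hvanish hy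

theorem integral_Icc_mul_eq_neg_of_hasDerivAt_update {n : ℕ} {a b : Fin n → ℝ} (hab : a ≤ b)
    (i : Fin n) {f df g dg : (Fin n → ℝ) → ℝ}
    (hf : ContinuousOn f (Icc a b)) (hdf : ContinuousOn df (Icc a b))
    (hg : ContinuousOn g (Icc a b)) (hdg : ContinuousOn dg (Icc a b))
    (hf' : ∀ ψ ∈ Icc a b, HasDerivAt (fun t => f (Function.update ψ i t)) (df ψ) (ψ i))
    (hg' : ∀ ψ ∈ Icc a b, HasDerivAt (fun t => g (Function.update ψ i t)) (dg ψ) (ψ i))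
    (hvanish : ∀ ψ ∈ Icc a b, (ψ i = a i ∨ ψ i = b i) → g ψ = 0) :
    ∫ ψ in Icc a b, f ψ * dg ψ = -∫ ψ in Icc a b, df ψ * g ψ := by
  have hprod : ∫ ψ in Icc a b, (df ψ * g ψ + f ψ * dg ψ) = 0 := by
    refine integral_Icc_eq_zero_of_hasDerivAt_update (g := fun ψ => f ψ * g ψ) hab i
      ((hdf.mul hg).add (hf.mul hdg)) (fun ψ hψ => ?_)
      fun ψ hψ hface => by rw [hvanish ψ hψ hface, mul_zero]
    simpa only [Function.update_eq_self] using (hf' ψ hψ).fun_mul (hg' ψ hψ)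
  have hint₁ : IntegrableOn (fun ψ => df ψ * g ψ) (Icc a b) :=
    (hdf.mul hg).integrableOn_compact isCompact_Icc
  have hint₂ : IntegrableOn (fun ψ => f ψ * dg ψ) (Icc a b) :=
    (hf.mul hdg).integrableOn_compact isCompact_Icc
  rw [integral_add hint₁ hint₂] at hprod
  linarith

theorem posSemidef_of_integral_mul_mul {ι α : Type*} [Fintype ι] [MeasurableSpace α]
    {μ : Measure α} {v : ι → α → ℝ} {w : α → ℝ} (hw : 0 ≤ᵐ[μ] w)
    (hint : ∀ i j, Integrable (fun z => v i z * v j z * w z) μ) :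
    (Matrix.of fun i j => ∫ z, v i z * v j z * w z ∂μ).PosSemidef := by
  refine posSemidef_iff_dotProduct_mulVec.2 ⟨IsHermitian.ext fun i j => ?_, fun c => ?_⟩
  · simp only [of_apply, star_trivial, mul_comm (v j _)]
  have hquad : star c ⬝ᵥ ((Matrix.of fun i j => ∫ z, v i z * v j z * w z ∂μ) *ᵥ c)
      = ∫ z, (∑ i, c i * v i z) ^ 2 * w z ∂μ := by
    have hexpand : ∀ z, (∑ i, c i * v i z) ^ 2 * w z
        = ∑ i, c i * ∑ j, (v i z * v j z * w z) * c j := by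
      intro z
      simp only [sq, Finset.sum_mul, Finset.mul_sum]
      exact Finset.sum_congr rfl fun i _ => Finset.sum_congr rfl fun j _ => by ring
    simp only [hexpand, dotProduct, mulVec, star_trivial, of_apply]
    rw [integral_finsetSum _ fun i _ =>
      (integrable_finsetSum _ fun j _ => (hint i j).mul_const _).const_mul _]
    refine Finset.sum_congr rfl fun i _ => ?_
    rw [integral_const_mul, integral_finsetSum _ fun j _ => (hint i j).mul_const _]
    simp only [integral_mul_const]
  rw [hquad]
  exact integral_nonneg_of_ae (hw.mono fun z hz => mul_nonneg (sq_nonneg _) hz)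

theorem posSemidef_fromBlocks_of_eq_integral_mul_mul {ι κ α : Type*} [Fintype ι] [Fintype κ]
    [MeasurableSpace α] {μ : Measure α} {u : ι → α → ℝ} {v : κ → α → ℝ} {w : α → ℝ}
    (hw : 0 ≤ᵐ[μ] w) (huu : ∀ i i', Integrable (fun z => u i z * u i' z * w z) μ)
    (huv : ∀ i k, Integrable (fun z => u i z * v k z * w z) μ)
    (hvv : ∀ k k', Integrable (fun z => v k z * v k' z * w z) μ)
    {A : Matrix ι ι ℝ} {B : Matrix ι κ ℝ} {C : Matrix κ κ ℝ}
    (hA : ∀ i i', A i i' = ∫ z, u i z * u i' z * w z ∂μ)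
    (hB : ∀ i k, B i k = ∫ z, u i z * v k z * w z ∂μ)
    (hC : ∀ k k', C k k' = ∫ z, v k z * v k' z * w z ∂μ) :
    (fromBlocks A B Bᴴ C).PosSemidef := by
  have hint : ∀ q q', Integrable (fun z => Sum.elim u v q z * Sum.elim u v q' z * w z) μ := by
    rintro (i | k) (i' | k')
    · exact huu i i'
    · exact huv i k'
    · simpa only [Sum.elim_inl, Sum.elim_inr, mul_comm (v k _)] using huv i' k
    · exact hvv k k'
  convert posSemidef_of_integral_mul_mul hw hint using 1
  ext (i | k) (i' | k') <;>
    simp only [fromBlocks_apply₁₁, fromBlocks_apply₁₂, fromBlocks_apply₂₁, fromBlocks_apply₂₂,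
      conjTranspose_apply, of_apply, star_trivial, Sum.elim_inl, Sum.elim_inr, hA, hB, hC]
  simp only [mul_comm (v k _)]

theorem stmt_6_general (nx nψ nθ : ℕ)
    (a b : Fin nψ → ℝ) (hab : ∀ k, a k < b k)
    (p : (Fin nx → ℝ) → (Fin nψ → ℝ) → ℝ)
    (dp : (Fin nx → ℝ) → (Fin nψ → ℝ) → Fin nψ → ℝ)
    (θhat : (Fin nx → ℝ) → Fin nθ → ℝ)
    (θ0 : (Fin nψ → ℝ) → Fin nθ → ℝ)
    (D : (Fin nψ → ℝ) → Matrix (Fin nθ) (Fin nψ) ℝ)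
    (s : (Fin nx → ℝ) → (Fin nψ → ℝ) → Fin nψ → ℝ)
    (hp_nonneg : ∀ x ψ, 0 ≤ p x ψ)
    -- θ₀ is continuously differentiable on the box, with Jacobian matrix D
    (hθ0_smooth : ContDiffOn ℝ 1 θ0 (Set.Icc a b))
    (hθ0_deriv : ∀ ψ ∈ Set.Icc a b, ∀ i : Fin nψ,
      HasDerivAt (fun t => θ0 (Function.update ψ i t)) (fun j => D ψ j i) (ψ i))
    (hD_cont : ContinuousOn D (Set.Icc a b))
    -- (i) regularity of the joint density and vanishing on the faces of the box
    (hp_cont : ∀ x, ContinuousOn (p x) (Set.Icc a b))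
    (hp_deriv : ∀ x, ∀ ψ ∈ Set.Icc a b, ∀ i : Fin nψ,
      HasDerivAt (fun t => p x (Function.update ψ i t)) (dp x ψ i) (ψ i))
    (hdp_cont : ∀ x, ∀ i : Fin nψ, ContinuousOn (fun ψ => dp x ψ i) (Set.Icc a b))
    (hvanish : ∀ x, ∀ ψ ∈ Set.Icc a b, ∀ i : Fin nψ,
      (ψ i = a i ∨ ψ i = b i) → p x ψ = 0)
    -- (ii) `s` is the score of `p`
    (hscore : ∀ x, ∀ ψ ∈ Set.Icc a b, ∀ i : Fin nψ, dp x ψ i = s x ψ i * p x ψ)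
    -- (iii) integrability of all matrix entries on ℝ^{n_x} × Ψ
    (hintE : ∀ (j k : Fin nθ),
      Integrable (fun z : (Fin nx → ℝ) × (Fin nψ → ℝ) =>
        (θhat z.1 j - θ0 z.2 j) * (θhat z.1 k - θ0 z.2 k) * p z.1 z.2)
      ((volume : Measure (Fin nx → ℝ)).prod (volume.restrict (Set.Icc a b))))
    (hintCross : ∀ (j : Fin nθ) (i : Fin nψ),
      Integrable (fun z : (Fin nx → ℝ) × (Fin nψ → ℝ) =>
        (θhat z.1 j - θ0 z.2 j) * s z.1 z.2 i * p z.1 z.2)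
      ((volume : Measure (Fin nx → ℝ)).prod (volume.restrict (Set.Icc a b))))
    (hintJ : ∀ (i i' : Fin nψ),
      Integrable (fun z : (Fin nx → ℝ) × (Fin nψ → ℝ) =>
        s z.1 z.2 i * s z.1 z.2 i' * p z.1 z.2)
      ((volume : Measure (Fin nx → ℝ)).prod (volume.restrict (Set.Icc a b))))
    (E : Matrix (Fin nθ) (Fin nθ) ℝ)
    (hE : E = Matrix.of fun j k => ∫ x : Fin nx → ℝ, ∫ ψ in Set.Icc a b,
      (θhat x j - θ0 ψ j) * (θhat x k - θ0 ψ k) * p x ψ)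
    (T : Matrix (Fin nθ) (Fin nψ) ℝ)
    (hT : T = Matrix.of fun j i => ∫ x : Fin nx → ℝ, ∫ ψ in Set.Icc a b,
      D ψ j i * p x ψ)
    (J : Matrix (Fin nψ) (Fin nψ) ℝ)
    (hJ : J = Matrix.of fun i i' => ∫ x : Fin nx → ℝ, ∫ ψ in Set.Icc a b,
      s x ψ i * s x ψ i' * p x ψ)
    (hJpd : J.PosDef) :
    (E - T * J⁻¹ * Tᵀ).PosSemidef := by
  have hcross : ∀ x j i, ∫ ψ in Icc a b, (θhat x j - θ0 ψ j) * s x ψ i * p x ψ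
      = ∫ ψ in Icc a b, D ψ j i * p x ψ := by
    intro x j i
    calc ∫ ψ in Icc a b, (θhat x j - θ0 ψ j) * s x ψ i * p x ψ
        = ∫ ψ in Icc a b, (θhat x j - θ0 ψ j) * dp x ψ i :=
          setIntegral_congr_fun measurableSet_Icc fun ψ hψ => by rw [hscore x ψ hψ i, mul_assoc]
      _ = -∫ ψ in Icc a b, -D ψ j i * p x ψ :=
          integral_Icc_mul_eq_neg_of_hasDerivAt_update (fun k => (hab k).le) i
            (continuousOn_const.sub ((continuous_apply j).comp_continuousOn
              hθ0_smooth.continuousOn))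
            (((continuous_apply i).comp (continuous_apply j)).comp_continuousOn hD_cont).neg
            (hp_cont x) (hdp_cont x i)
            (fun ψ hψ => (hasDerivAt_pi.1 (hθ0_deriv ψ hψ i) j).const_sub _)
            (hp_deriv x · · i) (hvanish x · · i)
      _ = ∫ ψ in Icc a b, D ψ j i * p x ψ := by simp only [neg_mul, integral_neg, neg_neg]
  have := hJpd.isUnit.invertible
  rw [← conjTranspose_eq_transpose_of_trivial, ← hJpd.fromBlocks₂₂]
  refine posSemidef_fromBlocks_of_eq_integral_mul_mul
    (u := fun j (z : (Fin nx → ℝ) × (Fin nψ → ℝ)) => θhat z.1 j - θ0 z.2 j)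
    (v := fun i z => s z.1 z.2 i) (ae_of_all _ fun z => hp_nonneg z.1 z.2)
    hintE hintCross hintJ (fun j k => ?_) (fun j i => ?_) fun i i' => ?_
  · rw [hE, of_apply]
    exact (integral_prod _ (hintE j k)).symm
  · rw [hT, of_apply, integral_prod _ (hintCross j i)]
    exact integral_congr_ae (ae_of_all _ fun x => (hcross x j i).symm)
  · rw [hJ, of_apply]
    exact (integral_prod _ (hintJ i i')).symm

/-- Theorem 1 of the paper: the Misspecified Bayesian Cramér–Rao Bound (MBCRB).
With `p` the true joint density of data `x` and parameter `ψ` supported in the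
compact box (vanishing on each pair of opposite faces), `θ₀` the pseudotrue
parameter map with Jacobian `D`, `θ̂` an estimator, `s` the Bayesian score of the
true joint density, `E` the error covariance of `θ̂` about the pseudotrue, `T` the
expected Jacobian and `J` the (positive definite) Bayesian Fisher Information
Matrix, the matrix `E − T J⁻¹ Tᵀ` is positive semidefinite. -/
theorem stmt_6 (nx nψ nθ : ℕ) (hnx : 1 ≤ nx) (hnψ : 1 ≤ nψ) (hnθ : 1 ≤ nθ)
    (a b : Fin nψ → ℝ) (hab : ∀ k, a k < b k)
    (p : (Fin nx → ℝ) → (Fin nψ → ℝ) → ℝ)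
    (dp : (Fin nx → ℝ) → (Fin nψ → ℝ) → Fin nψ → ℝ)
    (θhat : (Fin nx → ℝ) → Fin nθ → ℝ)
    (θ0 : (Fin nψ → ℝ) → Fin nθ → ℝ)
    (D : (Fin nψ → ℝ) → Matrix (Fin nθ) (Fin nψ) ℝ)
    (s : (Fin nx → ℝ) → (Fin nψ → ℝ) → Fin nψ → ℝ)
    (hp_nonneg : ∀ x ψ, 0 ≤ p x ψ)
    (hθhat_meas : Measurable θhat)
    (hs_meas : Measurable fun z : (Fin nx → ℝ) × (Fin nψ → ℝ) => s z.1 z.2)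
    -- θ₀ is continuously differentiable on the box, with Jacobian matrix D
    (hθ0_smooth : ContDiffOn ℝ 1 θ0 (Set.Icc a b))
    (hθ0_deriv : ∀ ψ ∈ Set.Icc a b, ∀ i : Fin nψ,
      HasDerivAt (fun t => θ0 (Function.update ψ i t)) (fun j => D ψ j i) (ψ i))
    (hD_cont : ContinuousOn D (Set.Icc a b))
    -- (i) regularity of the joint density and vanishing on the faces of the box
    (hp_cont : ∀ x, ContinuousOn (p x) (Set.Icc a b))
    (hp_deriv : ∀ x, ∀ ψ ∈ Set.Icc a b, ∀ i : Fin nψ,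
      HasDerivAt (fun t => p x (Function.update ψ i t)) (dp x ψ i) (ψ i))
    (hdp_cont : ∀ x, ∀ i : Fin nψ, ContinuousOn (fun ψ => dp x ψ i) (Set.Icc a b))
    (hvanish : ∀ x, ∀ ψ ∈ Set.Icc a b, ∀ i : Fin nψ,
      (ψ i = a i ∨ ψ i = b i) → p x ψ = 0)
    -- (ii) `s` is the score of `p`
    (hscore : ∀ x, ∀ ψ ∈ Set.Icc a b, ∀ i : Fin nψ, dp x ψ i = s x ψ i * p x ψ)
    -- (iii) integrability of all matrix entries on ℝ^{n_x} × Ψ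
    (hintE : ∀ (j k : Fin nθ),
      Integrable (fun z : (Fin nx → ℝ) × (Fin nψ → ℝ) =>
        (θhat z.1 j - θ0 z.2 j) * (θhat z.1 k - θ0 z.2 k) * p z.1 z.2)
      ((volume : Measure (Fin nx → ℝ)).prod (volume.restrict (Set.Icc a b))))
    (hintCross : ∀ (j : Fin nθ) (i : Fin nψ),
      Integrable (fun z : (Fin nx → ℝ) × (Fin nψ → ℝ) =>
        (θhat z.1 j - θ0 z.2 j) * s z.1 z.2 i * p z.1 z.2)
      ((volume : Measure (Fin nx → ℝ)).prod (volume.restrict (Set.Icc a b))))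
    (hintJ : ∀ (i i' : Fin nψ),
      Integrable (fun z : (Fin nx → ℝ) × (Fin nψ → ℝ) =>
        s z.1 z.2 i * s z.1 z.2 i' * p z.1 z.2)
      ((volume : Measure (Fin nx → ℝ)).prod (volume.restrict (Set.Icc a b))))
    (hintT : ∀ (j : Fin nθ) (i : Fin nψ),
      Integrable (fun z : (Fin nx → ℝ) × (Fin nψ → ℝ) => D z.2 j i * p z.1 z.2)
      ((volume : Measure (Fin nx → ℝ)).prod (volume.restrict (Set.Icc a b))))
    (E : Matrix (Fin nθ) (Fin nθ) ℝ)
    (hE : E = Matrix.of fun j k => ∫ x : Fin nx → ℝ, ∫ ψ in Set.Icc a b,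
      (θhat x j - θ0 ψ j) * (θhat x k - θ0 ψ k) * p x ψ)
    (T : Matrix (Fin nθ) (Fin nψ) ℝ)
    (hT : T = Matrix.of fun j i => ∫ x : Fin nx → ℝ, ∫ ψ in Set.Icc a b,
      D ψ j i * p x ψ)
    (J : Matrix (Fin nψ) (Fin nψ) ℝ)
    (hJ : J = Matrix.of fun i i' => ∫ x : Fin nx → ℝ, ∫ ψ in Set.Icc a b,
      s x ψ i * s x ψ i' * p x ψ)
    (hJpd : J.PosDef) :
    (E - T * J⁻¹ * Tᵀ).PosSemidef :=
  stmt_6_general nx nψ nθ a b hab p dp θhat θ0 D s hp_nonneg hθ0_smooth hθ0_deriv hD_cont hp_cont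
    hp_deriv hdp_cont hvanish hscore hintE hintCross hintJ E hE T hT J hJ hJpd
end

section
/- Fix dimensions n_x, n ≥ 1. Let Ψ = ∏_{k=1}^{n} [a_k, b_k] be a compact box in ℝⁿ with a_k < b_k for all k. Let p : ℝ^{n_x} × ℝⁿ → ℝ be nonnegative with ∫∫_{ℝ^{n_x} × Ψ} p(x, ψ) dψ dx = 1, let θ̂ : ℝ^{n_x} → ℝⁿ be measurable, and let s : ℝ^{n_x} × ℝⁿ → ℝⁿ be measurable. Assume: (i) for each x and each i, ψ ↦ p(x, ψ) is continuous on Ψ with continuous partial derivative ∂p/∂ψ_i, and p(x, ψ) = 0 whenever ψ_i = a_i or ψ_i = b_i; (ii) ∂p/∂ψ_i(x, ψ) = s_i(x, ψ) p(x, ψ) for all (x, ψ) ∈ ℝ^{n_x} × Ψ and all i; (iii) all entries of (θ̂(x) − ψ)(θ̂(x) − ψ)ᵀ p(x, ψ), (θ̂(x) − ψ) s(x, ψ)ᵀ p(x, ψ), and s(x, ψ) s(x, ψ)ᵀ p(x, ψ) are integrable on ℝ^{n_x} × Ψ. If J = ∫∫ s(x, ψ) s(x, ψ)ᵀ p(x,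 ψ) dψ dx is positive definite, then ∫∫ (θ̂(x) − ψ)(θ̂(x) − ψ)ᵀ p(x, ψ) dψ dx − J⁻¹ is positive semidefinite. -/
/-!
Integrating by parts in `ψ j` over the box, where `p` vanishes on the faces, shows that the
cross moment `∫∫ (θ̂ - ψ) sᵀ p` is the identity matrix. Hence for all vectors `u`, `v` the
nonnegative integral `∫∫ (uᵀ (θ̂ - ψ) - vᵀ s)² p` equals `uᵀ E u - 2 uᵀ v + vᵀ J v`, and the
choice `v = J⁻¹ u` turns this into `uᵀ (E - J⁻¹) u ≥ 0`.
-/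

open Matrix MeasureTheory Set

theorem intervalIntegral.integral_sub_mul_deriv_eq_integral {α β c : ℝ} {h h' : ℝ → ℝ}
    (hd : ∀ t ∈ uIcc α β, HasDerivAt h (h' t) t) (hh' : IntervalIntegrable h' volume α β)
    (hα : h α = 0) (hβ : h β = 0) :
    ∫ t in α..β, (c - t) * h' t = ∫ t in α..β, h t := by
  rw [integral_mul_deriv_eq_deriv_mul (fun t _ => (hasDerivAt_id' t).const_sub c) hd
    intervalIntegrable_const hh']
  simp [hα, hβ]

theorem setIntegral_Icc_eq_integral_insertNth_s14 {m : ℕ} (a b : Fin (m + 1) → ℝ) (j : Fin (m + 1))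
    {f : (Fin (m + 1) → ℝ) → ℝ} (hf : IntegrableOn f (Icc a b)) :
    ∫ ψ in Icc a b, f ψ = ∫ y in Icc (a ∘ j.succAbove) (b ∘ j.succAbove),
      ∫ t in Icc (a j) (b j), f (j.insertNth t y) := by
  set e := (MeasurableEquiv.piFinSuccAbove (fun _ => ℝ) j).symm
  have he : MeasurePreserving e :=
    (volume_preserving_piFinSuccAbove (fun _ : Fin (m + 1) => ℝ) j).symm _
  have hpre : e ⁻¹' Icc a b = Icc (a j) (b j) ×ˢ Icc (a ∘ j.succAbove) (b ∘ j.succAbove) :=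
    ((Fin.insertNthOrderIso (fun _ => ℝ) j).preimage_Icc _ _).trans (Icc_prod_eq _ _)
  have hint : Integrable (fun z => f (e z))
      ((volume.restrict (Icc (a j) (b j))).prod
        (volume.restrict (Icc (a ∘ j.succAbove) (b ∘ j.succAbove)))) := by
    rw [Measure.prod_restrict, ← Measure.volume_eq_prod, ← hpre]
    exact (he.integrableOn_comp_preimage e.measurableEmbedding).2 hf
  rw [← he.map_eq, setIntegral_map_equiv, hpre, Measure.volume_eq_prod, ← Measure.prod_restrict,
    integral_prod _ hint]
  exact integral_integral_swap hint

theorem integral_Icc_sub_mul_partialDeriv_insertNth {m : ℕ} {a b : Fin (m + 1) → ℝ}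
    {q dq : (Fin (m + 1) → ℝ) → ℝ} {j : Fin (m + 1)} (hab : a ≤ b) (c : ℝ) (i : Fin (m + 1))
    (hq : ∀ ψ ∈ Icc a b, HasDerivAt (fun t => q (Function.update ψ j t)) (dq ψ) (ψ j))
    (hdq : ContinuousOn dq (Icc a b))
    (hvan : ∀ ψ ∈ Icc a b, ψ j = a j ∨ ψ j = b j → q ψ = 0)
    {y : Fin m → ℝ} (hy : y ∈ Icc (a ∘ j.succAbove) (b ∘ j.succAbove)) :
    ∫ t in Icc (a j) (b j), (c - (j.insertNth t y : Fin (m + 1) → ℝ) i) * dq (j.insertNth t y) =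
      if i = j then ∫ t in Icc (a j) (b j), q (j.insertNth t y) else 0 := by
  have hmem : ∀ t ∈ uIcc (a j) (b j), j.insertNth t y ∈ Icc a b := fun t ht =>
    Fin.insertNth_mem_Icc.2 ⟨uIcc_of_le (hab j) ▸ ht, hy⟩
  have hd : ∀ t ∈ uIcc (a j) (b j),
      HasDerivAt (fun t => q (j.insertNth t y)) (dq (j.insertNth t y)) t := fun t ht => by
    simpa using hq _ (hmem t ht)
  have hdq' : IntervalIntegrable (fun t => dq (j.insertNth t y)) volume (a j) (b j) :=
    (hdq.comp (by fun_prop) hmem).intervalIntegrable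
  have hvan' : ∀ t ∈ ({a j, b j} : Set ℝ), q (j.insertNth t y) = 0 := fun t ht =>
    hvan _ (hmem t (by aesop)) (by simpa using ht)
  simp only [integral_Icc_eq_integral_Ioc, ← intervalIntegral.integral_of_le (hab j)]
  split_ifs with hij
  · subst hij
    simp only [Fin.insertNth_apply_same]
    exact intervalIntegral.integral_sub_mul_deriv_eq_integral hd hdq' (hvan' _ (by simp))
      (hvan' _ (by simp))
  · obtain ⟨k, rfl⟩ := Fin.exists_succAbove_eq hij
    simp only [Fin.insertNth_apply_succAbove]
    rw [intervalIntegral.integral_const_mul, intervalIntegral.integral_eq_sub_of_hasDerivAt hd hdq',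
      hvan' _ (by simp), hvan' _ (by simp), sub_self, mul_zero]

theorem setIntegral_Icc_sub_mul_partialDeriv {n : ℕ} {a b : Fin n → ℝ} (hab : a ≤ b)
    {q dq : (Fin n → ℝ) → ℝ} (c : ℝ) (i j : Fin n) (hq_cont : ContinuousOn q (Icc a b))
    (hq : ∀ ψ ∈ Icc a b, HasDerivAt (fun t => q (Function.update ψ j t)) (dq ψ) (ψ j))
    (hdq : ContinuousOn dq (Icc a b))
    (hvan : ∀ ψ ∈ Icc a b, ψ j = a j ∨ ψ j = b j → q ψ = 0) :
    ∫ ψ in Icc a b, (c - ψ i) * dq ψ = if i = j then ∫ ψ in Icc a b, q ψ else 0 := by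
  obtain ⟨m, rfl⟩ := Nat.exists_eq_add_one_of_ne_zero j.pos.ne'
  have hint : ContinuousOn (fun ψ => (c - ψ i) * dq ψ) (Icc a b) := by fun_prop
  rw [setIntegral_Icc_eq_integral_insertNth_s14 a b j hint.integrableOn_Icc,
    setIntegral_congr_fun measurableSet_Icc fun y hy =>
      integral_Icc_sub_mul_partialDeriv_insertNth hab c i hq hdq hvan hy]
  split_ifs
  · exact (setIntegral_Icc_eq_integral_insertNth_s14 a b j hq_cont.integrableOn_Icc).symm
  · exact integral_zero _ _

theorem dotProduct_mul_dotProduct_mul {ι : Type*} [Fintype ι] (u v x y : ι → ℝ) (c : ℝ) :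
    (u ⬝ᵥ x) * (v ⬝ᵥ y) * c = ∑ i, ∑ j, u i * v j * (x i * y j * c) := by
  rw [dotProduct, dotProduct, Finset.sum_mul_sum, Finset.sum_mul]
  exact Finset.sum_congr rfl fun i _ => by
    rw [Finset.sum_mul]
    exact Finset.sum_congr rfl fun j _ => by ring

section WeightedGram

variable {α ι : Type*} [MeasurableSpace α] (μ : Measure α) (w : α → ℝ)

noncomputable def weightedGram (f g : α → ι → ℝ) : Matrix ι ι ℝ :=
  Matrix.of fun i j => ∫ z, f z i * g z j * w z ∂μ

theorem isHermitian_weightedGram_self (f : α → ι → ℝ) : (weightedGram μ w f f).IsHermitian :=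
  IsHermitian.ext fun i j => by simp only [weightedGram, of_apply, star_trivial, mul_comm (f _ j)]

variable [Fintype ι] {μ w} {f g : α → ι → ℝ}

theorem integrable_dotProduct_mul_dotProduct_mul
    (h : ∀ i j, Integrable (fun z => f z i * g z j * w z) μ) (u v : ι → ℝ) :
    Integrable (fun z => (u ⬝ᵥ f z) * (v ⬝ᵥ g z) * w z) μ := by
  simp only [dotProduct_mul_dotProduct_mul]
  exact integrable_finsetSum _ fun i _ => integrable_finsetSum _ fun j _ => (h i j).const_mul _

theorem dotProduct_weightedGram_mulVec
    (h : ∀ i j, Integrable (fun z => f z i * g z j * w z) μ) (u v : ι → ℝ) :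
    u ⬝ᵥ (weightedGram μ w f g *ᵥ v) = ∫ z, (u ⬝ᵥ f z) * (v ⬝ᵥ g z) * w z ∂μ := by
  simp only [dotProduct_mul_dotProduct_mul]
  rw [integral_finsetSum _ fun i _ =>
    integrable_finsetSum _ fun j _ => (h i j).const_mul _]
  simp only [integral_finsetSum _ fun j _ => (h _ j).const_mul _, integral_const_mul,
    dotProduct, mulVec, weightedGram, of_apply, Finset.mul_sum]
  exact Finset.sum_congr rfl fun i _ => Finset.sum_congr rfl fun j _ => by ring

theorem weightedGram_quadratic_nonneg (hw : ∀ z, 0 ≤ w z)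
    (hff : ∀ i j, Integrable (fun z => f z i * f z j * w z) μ)
    (hfg : ∀ i j, Integrable (fun z => f z i * g z j * w z) μ)
    (hgg : ∀ i j, Integrable (fun z => g z i * g z j * w z) μ) (u v : ι → ℝ) :
    0 ≤ u ⬝ᵥ (weightedGram μ w f f *ᵥ u) - 2 * (u ⬝ᵥ (weightedGram μ w f g *ᵥ v)) +
      v ⬝ᵥ (weightedGram μ w g g *ᵥ v) := by
  have hA := integrable_dotProduct_mul_dotProduct_mul hff u u
  have hB := (integrable_dotProduct_mul_dotProduct_mul hfg u v).const_mul 2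
  have hC := integrable_dotProduct_mul_dotProduct_mul hgg v v
  rw [dotProduct_weightedGram_mulVec hff, dotProduct_weightedGram_mulVec hfg,
    dotProduct_weightedGram_mulVec hgg, ← integral_const_mul,
    ← integral_sub hA hB, ← integral_add (by exact hA.sub hB) hC]
  refine integral_nonneg fun z => ?_
  have hsq : (u ⬝ᵥ f z) * (u ⬝ᵥ f z) * w z - 2 * ((u ⬝ᵥ f z) * (v ⬝ᵥ g z) * w z) +
      (v ⬝ᵥ g z) * (v ⬝ᵥ g z) * w z = (u ⬝ᵥ f z - v ⬝ᵥ g z) ^ 2 * w z := by ring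
  exact hsq ▸ mul_nonneg (sq_nonneg _) (hw z)

end WeightedGram

theorem posSemidef_sub_inv_of_quadratic_nonneg {n : Type*} [Fintype n] [DecidableEq n]
    {E J : Matrix n n ℝ} (hE : E.IsHermitian) (hJ : J.PosDef)
    (h : ∀ u v, 0 ≤ u ⬝ᵥ (E *ᵥ u) - 2 * (u ⬝ᵥ v) + v ⬝ᵥ (J *ᵥ v)) :
    (E - J⁻¹).PosSemidef := by
  refine posSemidef_iff_dotProduct_mulVec.2 ⟨hE.sub hJ.inv.isHermitian, fun u => ?_⟩
  have hJJ : J *ᵥ (J⁻¹ *ᵥ u) = u := by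
    rw [mulVec_mulVec, mul_nonsing_inv _ ((isUnit_iff_isUnit_det J).1 hJ.isUnit), one_mulVec]
  have := h u (J⁻¹ *ᵥ u)
  rw [hJJ, dotProduct_comm _ u] at this
  rw [star_trivial, sub_mulVec, dotProduct_sub]
  linarith

theorem stmt_14_general (nx n : ℕ) (a b : Fin n → ℝ) (hab : ∀ k, a k < b k)
    (p : (Fin nx → ℝ) → (Fin n → ℝ) → ℝ)
    (dp : (Fin nx → ℝ) → (Fin n → ℝ) → Fin n → ℝ)
    (θhat : (Fin nx → ℝ) → Fin n → ℝ)
    (s : (Fin nx → ℝ) → (Fin n → ℝ) → Fin n → ℝ)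
    (hp_nonneg : ∀ x ψ, 0 ≤ p x ψ)
    (hp_mass : (∫ x : Fin nx → ℝ, ∫ ψ in Set.Icc a b, p x ψ) = 1)
    -- (i) regularity of the joint density and vanishing on the faces of the box
    (hp_cont : ∀ x, ContinuousOn (p x) (Set.Icc a b))
    (hp_deriv : ∀ x, ∀ ψ ∈ Set.Icc a b, ∀ i : Fin n,
      HasDerivAt (fun t => p x (Function.update ψ i t)) (dp x ψ i) (ψ i))
    (hdp_cont : ∀ x, ∀ i : Fin n, ContinuousOn (fun ψ => dp x ψ i) (Set.Icc a b))
    (hvanish : ∀ x, ∀ ψ ∈ Set.Icc a b, ∀ i : Fin n,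
      (ψ i = a i ∨ ψ i = b i) → p x ψ = 0)
    -- (ii) `s` is the score of `p`
    (hscore : ∀ x, ∀ ψ ∈ Set.Icc a b, ∀ i : Fin n, dp x ψ i = s x ψ i * p x ψ)
    -- (iii) integrability of all matrix entries on ℝ^{n_x} × Ψ
    (hintE : ∀ i j : Fin n,
      Integrable (fun z : (Fin nx → ℝ) × (Fin n → ℝ) =>
        (θhat z.1 i - z.2 i) * (θhat z.1 j - z.2 j) * p z.1 z.2)
      ((volume : Measure (Fin nx → ℝ)).prod (volume.restrict (Set.Icc a b))))
    (hintCross : ∀ i j : Fin n,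
      Integrable (fun z : (Fin nx → ℝ) × (Fin n → ℝ) =>
        (θhat z.1 i - z.2 i) * s z.1 z.2 j * p z.1 z.2)
      ((volume : Measure (Fin nx → ℝ)).prod (volume.restrict (Set.Icc a b))))
    (hintJ : ∀ i j : Fin n,
      Integrable (fun z : (Fin nx → ℝ) × (Fin n → ℝ) =>
        s z.1 z.2 i * s z.1 z.2 j * p z.1 z.2)
      ((volume : Measure (Fin nx → ℝ)).prod (volume.restrict (Set.Icc a b))))
    (E : Matrix (Fin n) (Fin n) ℝ)
    (hE : E = Matrix.of fun i j => ∫ x : Fin nx → ℝ, ∫ ψ in Set.Icc a b,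
      (θhat x i - ψ i) * (θhat x j - ψ j) * p x ψ)
    (J : Matrix (Fin n) (Fin n) ℝ)
    (hJ : J = Matrix.of fun i j => ∫ x : Fin nx → ℝ, ∫ ψ in Set.Icc a b,
      s x ψ i * s x ψ j * p x ψ)
    (hJpd : J.PosDef) :
    (E - J⁻¹).PosSemidef := by
  set μ := (volume : Measure (Fin nx → ℝ)).prod (volume.restrict (Icc a b))
  set w : (Fin nx → ℝ) × (Fin n → ℝ) → ℝ := fun z => p z.1 z.2
  set f : (Fin nx → ℝ) × (Fin n → ℝ) → Fin n → ℝ := fun z i => θhat z.1 i - z.2 i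
  set g : (Fin nx → ℝ) × (Fin n → ℝ) → Fin n → ℝ := fun z => s z.1 z.2
  have hEG : E = weightedGram μ w f f := by
    rw [hE]; ext i j; exact (integral_prod _ (hintE i j)).symm
  have hJG : J = weightedGram μ w g g := by
    rw [hJ]; ext i j; exact (integral_prod _ (hintJ i j)).symm
  have hcross : weightedGram μ w f g = 1 := by
    ext i j
    have hx : ∀ x, ∫ ψ in Icc a b, (θhat x i - ψ i) * s x ψ j * p x ψ =
        if i = j then ∫ ψ in Icc a b, p x ψ else 0 := fun x => by
      rw [← setIntegral_Icc_sub_mul_partialDeriv (fun k => (hab k).le) (θhat x i) i j (hp_cont x)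
        (fun ψ hψ => hp_deriv x ψ hψ j) (hdp_cont x j) (fun ψ hψ => hvanish x ψ hψ j)]
      exact setIntegral_congr_fun measurableSet_Icc fun ψ hψ => by rw [hscore x ψ hψ j, mul_assoc]
    rw [weightedGram, of_apply, integral_prod _ (hintCross i j)]
    simp only [hx, one_apply]
    split_ifs
    exacts [hp_mass, integral_zero _ _]
  refine posSemidef_sub_inv_of_quadratic_nonneg (hEG ▸ isHermitian_weightedGram_self μ w f) hJpd
    fun u v => ?_
  have h := weightedGram_quadratic_nonneg (μ := μ) (w := w) (f := f) (g := g)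
    (fun z => hp_nonneg z.1 z.2) hintE hintCross hintJ u v
  rwa [← hEG, ← hJG, hcross, one_mulVec] at h

/-- When the model is correctly specified the pseudotrue parameter coincides with the
true parameter and the MBCRB of Theorem 1 reduces to the classical Bayesian
Cramér–Rao Bound: the error covariance of any estimator about `ψ` is bounded below
by the inverse Bayesian Fisher Information Matrix `J⁻¹`. -/
theorem stmt_14 (nx n : ℕ) (hnx : 1 ≤ nx) (hn : 1 ≤ n)
    (a b : Fin n → ℝ) (hab : ∀ k, a k < b k)
    (p : (Fin nx → ℝ) → (Fin n → ℝ) → ℝ)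
    (dp : (Fin nx → ℝ) → (Fin n → ℝ) → Fin n → ℝ)
    (θhat : (Fin nx → ℝ) → Fin n → ℝ)
    (s : (Fin nx → ℝ) → (Fin n → ℝ) → Fin n → ℝ)
    (hp_nonneg : ∀ x ψ, 0 ≤ p x ψ)
    (hp_mass : (∫ x : Fin nx → ℝ, ∫ ψ in Set.Icc a b, p x ψ) = 1)
    (hθhat_meas : Measurable θhat)
    (hs_meas : Measurable fun z : (Fin nx → ℝ) × (Fin n → ℝ) => s z.1 z.2)
    -- (i) regularity of the joint density and vanishing on the faces of the box
    (hp_cont : ∀ x, ContinuousOn (p x) (Set.Icc a b))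
    (hp_deriv : ∀ x, ∀ ψ ∈ Set.Icc a b, ∀ i : Fin n,
      HasDerivAt (fun t => p x (Function.update ψ i t)) (dp x ψ i) (ψ i))
    (hdp_cont : ∀ x, ∀ i : Fin n, ContinuousOn (fun ψ => dp x ψ i) (Set.Icc a b))
    (hvanish : ∀ x, ∀ ψ ∈ Set.Icc a b, ∀ i : Fin n,
      (ψ i = a i ∨ ψ i = b i) → p x ψ = 0)
    -- (ii) `s` is the score of `p`
    (hscore : ∀ x, ∀ ψ ∈ Set.Icc a b, ∀ i : Fin n, dp x ψ i = s x ψ i * p x ψ)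
    -- (iii) integrability of all matrix entries on ℝ^{n_x} × Ψ
    (hintE : ∀ i j : Fin n,
      Integrable (fun z : (Fin nx → ℝ) × (Fin n → ℝ) =>
        (θhat z.1 i - z.2 i) * (θhat z.1 j - z.2 j) * p z.1 z.2)
      ((volume : Measure (Fin nx → ℝ)).prod (volume.restrict (Set.Icc a b))))
    (hintCross : ∀ i j : Fin n,
      Integrable (fun z : (Fin nx → ℝ) × (Fin n → ℝ) =>
        (θhat z.1 i - z.2 i) * s z.1 z.2 j * p z.1 z.2)
      ((volume : Measure (Fin nx → ℝ)).prod (volume.restrict (Set.Icc a b))))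
    (hintJ : ∀ i j : Fin n,
      Integrable (fun z : (Fin nx → ℝ) × (Fin n → ℝ) =>
        s z.1 z.2 i * s z.1 z.2 j * p z.1 z.2)
      ((volume : Measure (Fin nx → ℝ)).prod (volume.restrict (Set.Icc a b))))
    (E : Matrix (Fin n) (Fin n) ℝ)
    (hE : E = Matrix.of fun i j => ∫ x : Fin nx → ℝ, ∫ ψ in Set.Icc a b,
      (θhat x i - ψ i) * (θhat x j - ψ j) * p x ψ)
    (J : Matrix (Fin n) (Fin n) ℝ)
    (hJ : J = Matrix.of fun i j => ∫ x : Fin nx → ℝ, ∫ ψ in Set.Icc a b,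
      s x ψ i * s x ψ j * p x ψ)
    (hJpd : J.PosDef) :
    (E - J⁻¹).PosSemidef :=
  stmt_14_general nx n a b hab p dp θhat s hp_nonneg hp_mass hp_cont hp_deriv hdp_cont hvanish
    hscore hintE hintCross hintJ E hE J hJ hJpd
end
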